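/- arXiv:2512.02597 — 3 statements merged into one kernel-verified Lean document; each statement's English description precedes it below -/
import Mathlib

section
/- Let R be a nonassociative ring with an additive surjection σ and an additive map δ satisfying σ(1)=1 and δ(1)=0. If R is right Noetherian, then the flipped generalized polynomial ring R[X;σ,δ]^fl is right Noetherian. -/
open Finset
open scoped Classical

section Defs

variable {R : Type*} {S : Type*}

/-- Iterated power: `pw x 0 = 1`, `pw x (n+1) = pw x n * x`. -/
def pw [One S] [Mul S] (x : S) : ℕ → S
  | 0 => 1
  | n + 1 => pw x n * x

/-- `x` is power-associative. -/
def PowAssoc [One S] [Mul S] (x : S) : Prop := ∀ m n : ℕ, pw x m * pw x n = pw x (m + n)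

variable [NonAssocRing R] [NonAssocRing S]

/-- Interpret a finitely supported coefficient family as a left polynomial `Σ f(cᵢ)·xⁱ`. -/
noncomputable def lpoly (f : R →+* S) (x : S) (c : ℕ →₀ R) : S :=
  c.sum fun i r => f r * pw x i

/-- Right polynomial `Σ xⁱ·f(cᵢ)`. -/
noncomputable def rpoly (f : R →+* S) (x : S) (c : ℕ →₀ R) : S :=
  c.sum fun i r => pw x i * f r

/-- Left degree (`⊥` plays the role of `-∞`), computed from a representation as a
left polynomial in `x` (unique when `{1,x,x²,…}` is a left basis). -/
noncomputable def degl (f : R →+* S) (x : S) (p : S) : WithBot ℕ :=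
  if h : ∃ c : ℕ →₀ R, lpoly f x c = p then (Classical.choose h).support.max else ⊥

/-- Left leading coefficient (`0` for the zero polynomial). -/
noncomputable def lcl (f : R →+* S) (x : S) (p : S) : R :=
  if h : ∃ c : ℕ →₀ R, lpoly f x c = p then
    (Classical.choose h) (WithBot.unbotD 0 (Classical.choose h).support.max) else 0

/-- Right degree. -/
noncomputable def degr (f : R →+* S) (x : S) (p : S) : WithBot ℕ :=
  if h : ∃ c : ℕ →₀ R, rpoly f x c = p then (Classical.choose h).support.max else ⊥

/-- Right leading coefficient. -/
noncomputable def lcr (f : R →+* S) (x : S) (p : S) : R :=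
  if h : ∃ c : ℕ →₀ R, rpoly f x c = p then
    (Classical.choose h) (WithBot.unbotD 0 (Classical.choose h).support.max) else 0

/-- `(S,x)` is a left generalized nonassociative Ore extension of `R`
(with the embedding `f : R →+* S`). -/
structure IsLeftGNOE (f : R →+* S) (x : S) : Prop where
  inj : Function.Injective f
  powAssoc : PowAssoc x
  basis : Function.Bijective (lpoly f x)
  closed : ∀ (m n : ℕ) (r s : R), ∃ c : ℕ →₀ R,
    lpoly f x c = (f r * pw x m) * (f s * pw x n) ∧ ∀ i, m + n < i → c i = 0

/-- `(S,x)` is a right generalized nonassociative Ore extension of `R`. -/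
structure IsRightGNOE (f : R →+* S) (x : S) : Prop where
  inj : Function.Injective f
  powAssoc : PowAssoc x
  basis : Function.Bijective (rpoly f x)
  closed : ∀ (m n : ℕ) (r s : R), ∃ c : ℕ →₀ R,
    rpoly f x c = (pw x m * f r) * (pw x n * f s) ∧ ∀ i, m + n < i → c i = 0

/-- Right ideal of a (nonassociative) ring. -/
def IsRightIdeal (T : Type*) [NonAssocRing T] (I : Set T) : Prop :=
  (0 : T) ∈ I ∧ (∀ a b, a ∈ I → b ∈ I → a + b ∈ I) ∧ (∀ a, a ∈ I → -a ∈ I) ∧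
    ∀ a t, a ∈ I → a * t ∈ I

/-- Left ideal of a (nonassociative) ring. -/
def IsLeftIdeal (T : Type*) [NonAssocRing T] (I : Set T) : Prop :=
  (0 : T) ∈ I ∧ (∀ a b, a ∈ I → b ∈ I → a + b ∈ I) ∧ (∀ a, a ∈ I → -a ∈ I) ∧
    ∀ a t, a ∈ I → t * a ∈ I

/-- The right ideal generated by a set. -/
def rIdealGen (T : Type*) [NonAssocRing T] (G : Set T) : Set T :=
  ⋂₀ {I : Set T | IsRightIdeal T I ∧ G ⊆ I}

/-- The left ideal generated by a set. -/
def lIdealGen (T : Type*) [NonAssocRing T] (G : Set T) : Set T :=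
  ⋂₀ {I : Set T | IsLeftIdeal T I ∧ G ⊆ I}

/-- Right Noetherian: every right ideal is finitely generated. -/
def RightNoeth (T : Type*) [NonAssocRing T] : Prop :=
  ∀ I : Set T, IsRightIdeal T I → ∃ G : Finset T, I = rIdealGen T ↑G

/-- Left Noetherian: every left ideal is finitely generated. -/
def LeftNoeth (T : Type*) [NonAssocRing T] : Prop :=
  ∀ I : Set T, IsLeftIdeal T I → ∃ G : Finset T, I = lIdealGen T ↑G

/-- `M` is a right `R`-submodule of `S` (via `f`). -/
def IsRightRSub (f : R →+* S) (M : Set S) : Prop :=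
  (0 : S) ∈ M ∧ (∀ a b, a ∈ M → b ∈ M → a + b ∈ M) ∧ (∀ a, a ∈ M → -a ∈ M) ∧
    ∀ a r, a ∈ M → a * f r ∈ M

/-- `M` is a left `R`-submodule of `S` (via `f`). -/
def IsLeftRSub (f : R →+* S) (M : Set S) : Prop :=
  (0 : S) ∈ M ∧ (∀ a b, a ∈ M → b ∈ M → a + b ∈ M) ∧ (∀ a, a ∈ M → -a ∈ M) ∧
    ∀ a r, a ∈ M → f r * a ∈ M

/-- The right `R`-submodule of `S` generated by a set. -/
def rSubGen (f : R →+* S) (G : Set S) : Set S :=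
  ⋂₀ {M : Set S | IsRightRSub f M ∧ G ⊆ M}

/-- `s` belongs to the right ideal of `S` generated by `p 0, …, p (n-1)` and admits a
left-degree-additive representation `s = Σⱼ (⋯((p_{iⱼ} s_{j1})s_{j2})⋯)s_{jm}` whose degree
bound `max_j (deg_l p_{iⱼ} + Σₖ deg_l s_{jk})` equals `deg_l s`. -/
def LDegAddMem (f : R →+* S) (x : S) {n : ℕ} (p : Fin n → S) (s : S) : Prop :=
  ∃ L : List (Fin n × List S),
    s = (L.map fun t => t.2.foldl (· * ·) (p t.1)).sum ∧
    degl f x s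
      = (L.map fun t => degl f x (p t.1) + (t.2.map (degl f x)).sum).foldr max ⊥

/-- `s` belongs to the left ideal of `S` generated by `p 0, …, p (n-1)` and admits a
right-degree-additive representation. -/
def RDegAddMem (f : R →+* S) (x : S) {n : ℕ} (p : Fin n → S) (s : S) : Prop :=
  ∃ L : List (Fin n × List S),
    s = (L.map fun t => t.2.foldl (fun b a => a * b) (p t.1)).sum ∧
    degr f x s
      = (L.map fun t => degr f x (p t.1) + (t.2.map (degr f x)).sum).foldr max ⊥

/-- The left Euclidean division algorithm for `(S,x)` over `R`. -/
def LeftEDA (f : R →+* S) (x : S) : Prop :=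
  ∀ (n : ℕ) (p : Fin n → S) (q : S), q ≠ 0 →
    (∀ i, degl f x (p i) ≤ degl f x q) →
    lcl f x q ∈ rIdealGen R (Set.range fun i => lcl f x (p i)) →
    ∃ s, LDegAddMem f x p s ∧ degl f x (q - s) < degl f x q

/-- The right Euclidean division algorithm for `(S,x)` over `R`. -/
def RightEDA (f : R →+* S) (x : S) : Prop :=
  ∀ (n : ℕ) (p : Fin n → S) (q : S), q ≠ 0 →
    (∀ i, degr f x (p i) ≤ degr f x q) →
    lcr f x q ∈ lIdealGen R (Set.range fun i => lcr f x (p i)) →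
    ∃ s, RDegAddMem f x p s ∧ degr f x (q - s) < degr f x q

/-- The maps `πᵢᵐ`: the sum of all `C(m,i)` compositions of `i` copies of `σ`
and `m - i` copies of `δ`. -/
def pimap (σ δ : R → R) : ℕ → ℕ → R → R
  | 0, 0 => id
  | _ + 1, 0 => fun _ => 0
  | 0, m + 1 => fun r => δ (pimap σ δ 0 m r)
  | i + 1, m + 1 => fun r => σ (pimap σ δ i m r) + δ (pimap σ δ (i + 1) m r)

/-- `(S,x)` realizes the generalized polynomial ring `R[X;σ,δ]`: `{1,x,x²,…}` is a left
`R`-basis and multiplication is given by `(rxᵐ)(sxⁿ) = Σᵢ (r πᵢᵐ(s)) x^{i+n}`. -/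
def IsGPolyRing (σ δ : R → R) (f : R →+* S) (x : S) : Prop :=
  Function.Injective f ∧ PowAssoc x ∧ Function.Bijective (lpoly f x) ∧
    ∀ (r s : R) (m n : ℕ),
      (f r * pw x m) * (f s * pw x n)
        = ∑ i ∈ Finset.range (m + 1), f (r * pimap σ δ i m s) * pw x (i + n)

/-- `(S,x)` realizes the flipped generalized polynomial ring `R[X;σ,δ]^fl`:
multiplication is given by `(rxᵐ)(sxⁿ) = Σᵢ τₙ(r, πᵢᵐ(s)) x^{i+n}`. -/
def IsFlipGPolyRing (σ δ : R → R) (f : R →+* S) (x : S) : Prop :=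
  Function.Injective f ∧ PowAssoc x ∧ Function.Bijective (lpoly f x) ∧
    ∀ (r s : R) (m n : ℕ),
      (f r * pw x m) * (f s * pw x n)
        = ∑ i ∈ Finset.range (m + 1),
            f (if Even n then r * pimap σ δ i m s else pimap σ δ i m s * r) * pw x (i + n)

end Defs

section Proof14

variable {R : Type*} {S : Type*} [NonAssocRing R] [NonAssocRing S]

lemma mem_rIdealGen {T : Type*} [NonAssocRing T] {G : Set T} {a : T} :
    a ∈ rIdealGen T G ↔ ∀ I : Set T, IsRightIdeal T I → G ⊆ I → a ∈ I := by
  constructor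
  · intro h I hI hG
    exact Set.mem_sInter.1 h I ⟨hI, hG⟩
  · intro h
    exact Set.mem_sInter.2 fun I hI => h I hI.1 hI.2

lemma rIdealGen_isIdeal (T : Type*) [NonAssocRing T] (G : Set T) :
    IsRightIdeal T (rIdealGen T G) := by
  refine ⟨?_, ?_, ?_, ?_⟩
  · exact mem_rIdealGen.2 fun I hI _ => hI.1
  · intro a b ha hb
    exact mem_rIdealGen.2 fun I hI hG =>
      hI.2.1 a b (mem_rIdealGen.1 ha I hI hG) (mem_rIdealGen.1 hb I hI hG)
  · intro a ha
    exact mem_rIdealGen.2 fun I hI hG => hI.2.2.1 a (mem_rIdealGen.1 ha I hI hG)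
  · intro a t ha
    exact mem_rIdealGen.2 fun I hI hG => hI.2.2.2 a t (mem_rIdealGen.1 ha I hI hG)

lemma subset_rIdealGen (T : Type*) [NonAssocRing T] (G : Set T) : G ⊆ rIdealGen T G :=
  fun _ hg => mem_rIdealGen.2 fun _ _ hG => hG hg

lemma rIdealGen_subset {T : Type*} [NonAssocRing T] {G I : Set T}
    (hI : IsRightIdeal T I) (hG : G ⊆ I) : rIdealGen T G ⊆ I :=
  fun _ ha => mem_rIdealGen.1 ha I hI hG

lemma chain_stab {T : Type*} [NonAssocRing T] (hT : RightNoeth T) (C : ℕ → Set T)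
    (hid : ∀ n, IsRightIdeal T (C n)) (hmono : ∀ n, C n ⊆ C (n + 1)) :
    ∃ N, ∀ n, N ≤ n → C n = C N := by
  have hmono' : ∀ j k, j ≤ k → C j ⊆ C k := by
    intro j k h
    induction h with
    | refl => exact fun _ h => h
    | step _ ih => exact fun a ha => hmono _ (ih ha)
  have hUid : IsRightIdeal T (⋃ n, C n) := by
    refine ⟨Set.mem_iUnion.2 ⟨0, (hid 0).1⟩, ?_, ?_, ?_⟩
    · intro a b ha hb
      obtain ⟨j, hj⟩ := Set.mem_iUnion.1 ha
      obtain ⟨k, hk⟩ := Set.mem_iUnion.1 hb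
      exact Set.mem_iUnion.2 ⟨max j k, (hid _).2.1 a b
        (hmono' _ _ (le_max_left j k) hj) (hmono' _ _ (le_max_right j k) hk)⟩
    · intro a ha
      obtain ⟨j, hj⟩ := Set.mem_iUnion.1 ha
      exact Set.mem_iUnion.2 ⟨j, (hid j).2.2.1 a hj⟩
    · intro a t ha
      obtain ⟨j, hj⟩ := Set.mem_iUnion.1 ha
      exact Set.mem_iUnion.2 ⟨j, (hid j).2.2.2 a t hj⟩
  obtain ⟨G, hGU⟩ := hT _ hUid
  have hGsub : (↑G : Set T) ⊆ ⋃ n, C n := by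
    rw [hGU]; exact subset_rIdealGen T _
  have hex : ∀ F : Finset T, (∀ g ∈ F, ∃ n, g ∈ C n) → ∃ N, ∀ g ∈ F, g ∈ C N := by
    intro F
    induction F using Finset.induction_on with
    | empty => exact fun _ => ⟨0, by simp⟩
    | insert _ _ hnotmem ih =>
      rename_i a s
      intro hF
      obtain ⟨N, hN⟩ := ih fun g hg => hF g (Finset.mem_insert_of_mem hg)
      obtain ⟨n, hn⟩ := hF a (Finset.mem_insert_self _ _)
      refine ⟨max N n, fun g hg => ?_⟩
      rcases Finset.mem_insert.1 hg with rfl | hg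
      · exact hmono' _ _ (le_max_right N n) hn
      · exact hmono' _ _ (le_max_left N n) (hN g hg)
  obtain ⟨N, hN⟩ := hex G fun g hg => Set.mem_iUnion.1 (hGsub hg)
  refine ⟨N, fun n hn => Set.Subset.antisymm ?_ (hmono' _ _ hn)⟩
  intro a ha
  have hUsub : (⋃ n, C n) ⊆ C N := by
    rw [hGU]; exact rIdealGen_subset (hid N) fun g hg => hN g hg
  exact hUsub (Set.mem_iUnion.2 ⟨n, ha⟩)

noncomputable def lpolyA (f : R →+* S) (x : S) : (ℕ →₀ R) →+ S where
  toFun := lpoly f x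
  map_zero' := by simp [lpoly]
  map_add' c c' := by
    show lpoly f x (c + c') = lpoly f x c + lpoly f x c'
    unfold lpoly
    exact Finsupp.sum_add_index' (fun i => by simp)
      (fun i (r r' : R) => by rw [map_add, add_mul])

lemma lpoly_zero (f : R →+* S) (x : S) : lpoly f x 0 = 0 := map_zero (lpolyA f x)

lemma lpoly_add (f : R →+* S) (x : S) (c c' : ℕ →₀ R) :
    lpoly f x (c + c') = lpoly f x c + lpoly f x c' := map_add (lpolyA f x) c c'

lemma lpoly_neg (f : R →+* S) (x : S) (c : ℕ →₀ R) :
    lpoly f x (-c) = -(lpoly f x c) := map_neg (lpolyA f x) c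

lemma lpoly_sum {ι : Type*} (f : R →+* S) (x : S) (t : Finset ι) (g : ι → ℕ →₀ R) :
    lpoly f x (∑ i ∈ t, g i) = ∑ i ∈ t, lpoly f x (g i) := map_sum (lpolyA f x) g t

lemma lpoly_single (f : R →+* S) (x : S) (i : ℕ) (r : R) :
    lpoly f x (Finsupp.single i r) = f r * pw x i := Finsupp.sum_single_index (by simp)

lemma lpoly_apply (f : R →+* S) (x : S) (c : ℕ →₀ R) :
    lpoly f x c = ∑ m ∈ c.support, f (c m) * pw x m := rfl

section pimapLemmas

variable (σ δ : R → R)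

lemma pimap_gt (hσ0 : σ 0 = 0) (hδ0 : δ 0 = 0) :
    ∀ m i, m < i → ∀ r, pimap σ δ i m r = 0 := by
  intro m
  induction m with
  | zero =>
    intro i hi r
    match i, hi with
    | i + 1, _ => simp [pimap]
  | succ m ih =>
    intro i hi r
    match i, hi with
    | i + 1, hi =>
      have h1 : m < i := Nat.lt_of_succ_lt_succ hi
      simp [pimap, ih i h1, ih (i + 1) (Nat.lt_succ_of_lt h1), hσ0, hδ0]

lemma pimap_diag (hσ0 : σ 0 = 0) (hδ0 : δ 0 = 0) :
    ∀ m r, pimap σ δ m m r = σ^[m] r := by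
  intro m
  induction m with
  | zero => intro r; simp [pimap]
  | succ m ih =>
    intro r
    have h1 : pimap σ δ (m + 1) (m + 1) r
        = σ (pimap σ δ m m r) + δ (pimap σ δ (m + 1) m r) := by simp [pimap]
    rw [h1, ih r, pimap_gt σ δ hσ0 hδ0 m (m + 1) (Nat.lt_succ_self m) r, hδ0, add_zero,
      Function.iterate_succ_apply']

lemma pimap_one (hσ0 : σ 0 = 0) (hδ0 : δ 0 = 0) (hσ1 : σ 1 = 1) (hδ1 : δ 1 = 0) :
    ∀ m i, pimap σ δ i m (1 : R) = if i = m then 1 else 0 := by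
  intro m
  induction m with
  | zero =>
    intro i
    cases i with
    | zero => simp [pimap]
    | succ i => simp [pimap]
  | succ m ih =>
    intro i
    cases i with
    | zero =>
      have h1 : pimap σ δ 0 (m + 1) (1 : R) = δ (pimap σ δ 0 m 1) := by simp [pimap]
      rw [h1, ih 0]
      by_cases h : (0 : ℕ) = m
      · rw [if_pos h, hδ1, if_neg (by omega)]
      · rw [if_neg h, hδ0, if_neg (by omega)]
    | succ i =>
      have h1 : pimap σ δ (i + 1) (m + 1) (1 : R)
          = σ (pimap σ δ i m 1) + δ (pimap σ δ (i + 1) m 1) := by simp [pimap]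
      rw [h1, ih i, ih (i + 1)]
      by_cases h : i = m
      · rw [if_pos h, hσ1, if_neg (by omega), hδ0, add_zero, if_pos (by omega)]
      · rw [if_neg h, hσ0]
        by_cases h3 : i + 1 = m
        · rw [if_pos h3, hδ1, add_zero, if_neg (by omega)]
        · rw [if_neg h3, hδ0, add_zero, if_neg (by omega)]

end pimapLemmas

noncomputable def Cmul (σ δ : R → R) (c : ℕ →₀ R) (s : R) : ℕ →₀ R :=
  ∑ m ∈ c.support, ∑ i ∈ Finset.range (m + 1), Finsupp.single i (c m * pimap σ δ i m s)

noncomputable def Cx (c : ℕ →₀ R) : ℕ →₀ R :=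
  ∑ m ∈ c.support, Finsupp.single (m + 1) (c m)

lemma lpoly_mul_f {f : R →+* S} {x : S} {σ δ : R → R} (hpoly : IsFlipGPolyRing σ δ f x)
    (c : ℕ →₀ R) (s : R) : lpoly f x c * f s = lpoly f x (Cmul σ δ c s) := by
  obtain ⟨-, -, -, hmul⟩ := hpoly
  rw [lpoly_apply, Finset.sum_mul, Cmul, lpoly_sum]
  refine Finset.sum_congr rfl fun m _ => ?_
  have h0 : f s = f s * pw x 0 := by simp [pw]
  rw [h0, hmul (c m) s m 0, lpoly_sum]
  refine Finset.sum_congr rfl fun i _ => ?_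
  rw [lpoly_single]
  simp

lemma lpoly_mul_x {f : R →+* S} {x : S} {σ δ : R → R}
    (hσ0 : σ 0 = 0) (hδ0 : δ 0 = 0) (hσ1 : σ 1 = 1) (hδ1 : δ 1 = 0)
    (hpoly : IsFlipGPolyRing σ δ f x) (c : ℕ →₀ R) :
    lpoly f x c * x = lpoly f x (Cx c) := by
  obtain ⟨-, -, -, hmul⟩ := hpoly
  have key : ∀ (m : ℕ) (r : R), (f r * pw x m) * x = f r * pw x (m + 1) := by
    intro m r
    have hx : f (1 : R) * pw x 1 = x := by simp [pw]
    have h1 := hmul r 1 m 1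
    rw [hx] at h1
    rw [h1]
    refine (Finset.sum_eq_single m ?_ ?_).trans ?_
    · intro i _ hne
      simp [pimap_one σ δ hσ0 hδ0 hσ1 hδ1 m i, hne, Nat.not_even_one]
    · intro h
      exact absurd (Finset.self_mem_range_succ m) h
    · simp [pimap_one σ δ hσ0 hδ0 hσ1 hδ1 m m, Nat.not_even_one]
  rw [lpoly_apply, Finset.sum_mul, Cx, lpoly_sum]
  exact Finset.sum_congr rfl fun m _ => by rw [lpoly_single, key m (c m)]

lemma Cmul_apply_gt {σ δ : R → R} (c : ℕ →₀ R) (s : R) (k : ℕ)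
    (hc : ∀ i, k < i → c i = 0) (j : ℕ) (hj : k < j) : Cmul σ δ c s j = 0 := by
  rw [Cmul, Finsupp.finset_sum_apply]
  refine Finset.sum_eq_zero fun m hm => ?_
  rw [Finsupp.finset_sum_apply]
  refine Finset.sum_eq_zero fun i hi => ?_
  have h1 : i < m + 1 := Finset.mem_range.1 hi
  have h2 : c m ≠ 0 := Finsupp.mem_support_iff.1 hm
  have h3 : ¬ k < m := fun h => h2 (hc m h)
  rw [Finsupp.single_apply, if_neg (by omega)]

lemma Cmul_apply_eq {σ δ : R → R} (c : ℕ →₀ R) (s : R) (k : ℕ)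
    (hc : ∀ i, k < i → c i = 0) : Cmul σ δ c s k = c k * pimap σ δ k k s := by
  rw [Cmul, Finsupp.finset_sum_apply]
  have hterm : ∀ m, (∑ i ∈ Finset.range (m + 1), Finsupp.single i (c m * pimap σ δ i m s)) k
      = if k ∈ Finset.range (m + 1) then c m * pimap σ δ k m s else 0 := by
    intro m
    rw [Finsupp.finset_sum_apply]
    simp only [Finsupp.single_apply]
    exact Finset.sum_ite_eq' (Finset.range (m + 1)) k _
  refine (Finset.sum_congr rfl fun m _ => hterm m).trans ?_
  refine (Finset.sum_eq_single k ?_ ?_).trans ?_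
  · intro m hm hne
    rw [if_neg]
    intro hmem
    have h1 : k < m + 1 := Finset.mem_range.1 hmem
    have h2 : c m ≠ 0 := Finsupp.mem_support_iff.1 hm
    have h3 : ¬ k < m := fun h => h2 (hc m h)
    omega
  · intro hk
    rw [if_pos (Finset.self_mem_range_succ k), Finsupp.notMem_support_iff.1 hk, zero_mul]
  · rw [if_pos (Finset.self_mem_range_succ k)]

lemma Cx_apply_eq (c : ℕ →₀ R) (k : ℕ) : Cx c (k + 1) = c k := by
  rw [Cx, Finsupp.finset_sum_apply]
  simp only [Finsupp.single_apply]
  refine (Finset.sum_eq_single k ?_ ?_).trans ?_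
  · intro m _ hne
    rw [if_neg (by omega)]
  · intro hk
    rw [if_pos rfl]
    exact Finsupp.notMem_support_iff.1 hk
  · rw [if_pos rfl]

lemma Cx_apply_gt (c : ℕ →₀ R) (k : ℕ) (hc : ∀ i, k < i → c i = 0)
    (j : ℕ) (hj : k + 1 < j) : Cx c j = 0 := by
  rw [Cx, Finsupp.finset_sum_apply]
  refine Finset.sum_eq_zero fun m hm => ?_
  have h2 : c m ≠ 0 := Finsupp.mem_support_iff.1 hm
  have h3 : ¬ k < m := fun h => h2 (hc m h)
  rw [Finsupp.single_apply, if_neg (by omega)]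

/-- The set of `k`-th coefficients of elements of `M` of degree `≤ k`. -/
def CS (f : R →+* S) (x : S) (M : Set S) (k : ℕ) : Set R :=
  {b | ∃ c : ℕ →₀ R, (∀ i, k < i → c i = 0) ∧ c k = b ∧ lpoly f x c ∈ M}

lemma CS_ideal {f : R →+* S} {x : S} {σ δ : R → R}
    (hσ0 : σ 0 = 0) (hδ0 : δ 0 = 0) (hσsurj : Function.Surjective σ)
    (hpoly : IsFlipGPolyRing σ δ f x) {M : Set S} (hM : IsRightIdeal S M) (k : ℕ) :
    IsRightIdeal R (CS f x M k) := by
  refine ⟨⟨0, fun i _ => rfl, rfl, by rw [lpoly_zero]; exact hM.1⟩, ?_, ?_, ?_⟩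
  · rintro a b ⟨c1, h1, h2, h3⟩ ⟨c2, g1, g2, g3⟩
    refine ⟨c1 + c2, fun i hi => ?_, ?_, ?_⟩
    · rw [Finsupp.add_apply, h1 i hi, g1 i hi, add_zero]
    · rw [Finsupp.add_apply, h2, g2]
    · rw [lpoly_add]; exact hM.2.1 _ _ h3 g3
  · rintro a ⟨c1, h1, h2, h3⟩
    refine ⟨-c1, fun i hi => ?_, ?_, ?_⟩
    · rw [Finsupp.neg_apply, h1 i hi, neg_zero]
    · rw [Finsupp.neg_apply, h2]
    · rw [lpoly_neg]; exact hM.2.2.1 _ h3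
  · rintro a r ⟨c1, h1, h2, h3⟩
    obtain ⟨s, hs⟩ := (hσsurj.iterate k) r
    refine ⟨Cmul σ δ c1 s, fun j hj => Cmul_apply_gt c1 s k h1 j hj, ?_, ?_⟩
    · rw [Cmul_apply_eq c1 s k h1, pimap_diag σ δ hσ0 hδ0 k s, hs, h2]
    · rw [← lpoly_mul_f hpoly]; exact hM.2.2.2 _ _ h3

lemma CS_mono {f : R →+* S} {x : S} {σ δ : R → R}
    (hσ0 : σ 0 = 0) (hδ0 : δ 0 = 0) (hσ1 : σ 1 = 1) (hδ1 : δ 1 = 0)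
    (hpoly : IsFlipGPolyRing σ δ f x) {M : Set S} (hM : IsRightIdeal S M) (k : ℕ) :
    CS f x M k ⊆ CS f x M (k + 1) := by
  rintro b ⟨c, h1, h2, h3⟩
  refine ⟨Cx c, fun j hj => Cx_apply_gt c k h1 j hj, by rw [Cx_apply_eq, h2], ?_⟩
  rw [← lpoly_mul_x hσ0 hδ0 hσ1 hδ1 hpoly]
  exact hM.2.2.2 _ x h3

lemma CS_mono_le {f : R →+* S} {x : S} {σ δ : R → R}
    (hσ0 : σ 0 = 0) (hδ0 : δ 0 = 0) (hσ1 : σ 1 = 1) (hδ1 : δ 1 = 0)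
    (hpoly : IsFlipGPolyRing σ δ f x) {M : Set S} (hM : IsRightIdeal S M) {j k : ℕ}
    (hjk : j ≤ k) : CS f x M j ⊆ CS f x M k := by
  induction hjk with
  | refl => exact fun _ h => h
  | step _ ih => exact fun a ha => CS_mono hσ0 hδ0 hσ1 hδ1 hpoly hM _ (ih ha)

end Proof14

/-- if `R` is right Noetherian and `σ` is an additive surjection, then
`R[X;σ,δ]^fl` is right Noetherian. -/
theorem stmt14 {R S : Type*} [NonAssocRing R] [NonAssocRing S] (f : R →+* S) (x : S) (σ δ : R → R)
    (hσadd : ∀ a b : R, σ (a + b) = σ a + σ b) (hδadd : ∀ a b : R, δ (a + b) = δ a + δ b)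
    (hσ1 : σ 1 = 1) (hδ1 : δ 1 = 0)
    (hσsurj : Function.Surjective σ)
    (hpoly : IsFlipGPolyRing σ δ f x)
    (hR : RightNoeth R) : RightNoeth S := by
  have hσ0 : σ 0 = 0 := by
    have h := hσadd 0 0
    rw [add_zero] at h
    exact (left_eq_add.mp h)
  have hδ0 : δ 0 = 0 := by
    have h := hδadd 0 0
    rw [add_zero] at h
    exact (left_eq_add.mp h)
  intro I hI
  -- the chain of coefficient ideals
  have hLid : ∀ n, IsRightIdeal R (CS f x I n) :=
    fun n => CS_ideal hσ0 hδ0 hσsurj hpoly hI n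
  have hLmono : ∀ n, CS f x I n ⊆ CS f x I (n + 1) :=
    fun n => CS_mono hσ0 hδ0 hσ1 hδ1 hpoly hI n
  obtain ⟨N, hN⟩ := chain_stab hR (fun n => CS f x I n) hLid hLmono
  -- generators of each coefficient ideal, with witnesses
  have hgen : ∀ n, ∃ G : Finset R, CS f x I n = rIdealGen R ↑G := fun n => hR _ (hLid n)
  choose G hG using hgen
  have hwit : ∀ n, ∀ g, g ∈ G n → ∃ c : ℕ →₀ R,
      (∀ i, n < i → c i = 0) ∧ c n = g ∧ lpoly f x c ∈ I := by
    intro n g hg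
    have : g ∈ CS f x I n := by
      rw [hG n]
      exact subset_rIdealGen R _ hg
    exact this
  choose! w hw using hwit
  -- the finite generating set
  let P : Finset S := (Finset.range (N + 1)).biUnion fun n =>
    (G n).image fun g => lpoly f x (w n g)
  have hPI : (↑P : Set S) ⊆ I := by
    intro p hp
    obtain ⟨n, hn, hp2⟩ := Finset.mem_biUnion.1 hp
    obtain ⟨g, hg, rfl⟩ := Finset.mem_image.1 hp2
    exact (hw n g hg).2.2
  have hJid : IsRightIdeal S (rIdealGen S ↑P) := rIdealGen_isIdeal S ↑P
  have hJI : rIdealGen S ↑P ⊆ I := rIdealGen_subset hI hPI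
  refine ⟨P, Set.Subset.antisymm ?_ hJI⟩
  -- main induction on the degree bound
  have main : ∀ k, ∀ c : ℕ →₀ R, (∀ i, k ≤ i → c i = 0) → lpoly f x c ∈ I →
      lpoly f x c ∈ rIdealGen S ↑P := by
    intro k
    induction k with
    | zero =>
      intro c hc _
      have hc0 : c = 0 := by
        ext i
        exact hc i (Nat.zero_le i)
      rw [hc0, lpoly_zero]
      exact hJid.1
    | succ k ih =>
      intro c hc hcI
      have haL : c k ∈ CS f x I k := ⟨c, fun i hi => hc i hi, rfl, hcI⟩
      have haLn : c k ∈ CS f x I (min k N) := by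
        rcases le_or_gt k N with h | h
        · rw [min_eq_left h]; exact haL
        · rw [min_eq_right h.le, ← hN k h.le]; exact haL
      rw [hG (min k N)] at haLn
      have hgensub : (↑(G (min k N)) : Set R) ⊆ CS f x (rIdealGen S ↑P) k := by
        intro g hg
        have hg' : g ∈ G (min k N) := Finset.mem_coe.1 hg
        have hmemP : lpoly f x (w (min k N) g) ∈ (↑P : Set S) := by
          refine Finset.mem_coe.2 (Finset.mem_biUnion.2 ⟨min k N, ?_, ?_⟩)
          · exact Finset.mem_range.2 (Nat.lt_succ_of_le (min_le_right k N))
          · exact Finset.mem_image_of_mem _ hg'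
        have h1 : g ∈ CS f x (rIdealGen S ↑P) (min k N) :=
          ⟨w (min k N) g, (hw (min k N) g hg').1, (hw (min k N) g hg').2.1,
            subset_rIdealGen S ↑P hmemP⟩
        exact CS_mono_le hσ0 hδ0 hσ1 hδ1 hpoly hJid (min_le_left k N) h1
      have hkey : c k ∈ CS f x (rIdealGen S ↑P) k :=
        rIdealGen_subset (CS_ideal hσ0 hδ0 hσsurj hpoly hJid k) hgensub haLn
      obtain ⟨c', hz', htop', hcJ'⟩ := hkey
      have hc'I : lpoly f x c' ∈ I := hJI hcJ'
      have hsubI : lpoly f x (c - c') ∈ I := by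
        have heq : lpoly f x (c - c') = lpoly f x c + -(lpoly f x c') := by
          rw [← lpoly_neg, ← lpoly_add]
          congr 1
          exact sub_eq_add_neg c c'
        rw [heq]
        exact hI.2.1 _ _ hcI (hI.2.2.1 _ hc'I)
      have hz2 : ∀ i, k ≤ i → (c - c') i = 0 := by
        intro i hi
        rcases eq_or_lt_of_le hi with rfl | hlt
        · rw [Finsupp.sub_apply, htop', sub_self]
        · rw [Finsupp.sub_apply, hc i hlt, hz' i hlt, sub_zero]
      have hrec := ih (c - c') hz2 hsubI
      have hfin : lpoly f x c = lpoly f x (c - c') + lpoly f x c' := by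
        rw [← lpoly_add]
        congr 1
        exact (sub_add_cancel c c').symm
      rw [hfin]
      exact hJid.2.1 _ _ hrec hcJ'
  intro s hs
  obtain ⟨c, rfl⟩ := hpoly.2.2.1.2 s
  have hbound : ∀ i, c.support.sup id + 1 ≤ i → c i = 0 := by
    intro i hi
    by_contra hne
    have hmem : i ∈ c.support := Finsupp.mem_support_iff.2 hne
    have := Finset.le_sup (f := id) hmem
    simp only [id] at this
    omega
  exact main (c.support.sup id + 1) c hbound hs
end

section
/- Let (S,x) be a right generalized nonassociative Ore extension of a nonassociative ring R satisfying the right Euclidean division algorithm. If R is left Noetherian, then S is left Noetherian. -/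
open Finset
open scoped Classical

section AuxHBT

variable {T : Type*} [NonAssocRing T]

lemma aux_mem_lIdealGen_iff {G : Set T} {a : T} :
    a ∈ lIdealGen T G ↔ ∀ J : Set T, IsLeftIdeal T J → G ⊆ J → a ∈ J := by
  simp only [lIdealGen, Set.mem_sInter, Set.mem_setOf_eq, and_imp]

lemma aux_isLeftIdeal_lIdealGen (G : Set T) : IsLeftIdeal T (lIdealGen T G) := by
  refine ⟨?_, ?_, ?_, ?_⟩
  · exact aux_mem_lIdealGen_iff.mpr fun J hJ _ => hJ.1
  · intro a b ha hb
    exact aux_mem_lIdealGen_iff.mpr fun J hJ hG =>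
      hJ.2.1 a b (aux_mem_lIdealGen_iff.mp ha J hJ hG) (aux_mem_lIdealGen_iff.mp hb J hJ hG)
  · intro a ha
    exact aux_mem_lIdealGen_iff.mpr fun J hJ hG =>
      hJ.2.2.1 a (aux_mem_lIdealGen_iff.mp ha J hJ hG)
  · intro a t ha
    exact aux_mem_lIdealGen_iff.mpr fun J hJ hG =>
      hJ.2.2.2 a t (aux_mem_lIdealGen_iff.mp ha J hJ hG)

lemma aux_subset_lIdealGen (G : Set T) : G ⊆ lIdealGen T G :=
  fun g hg => aux_mem_lIdealGen_iff.mpr fun _ _ hGJ => hGJ hg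

lemma aux_lIdealGen_subset {G I : Set T} (hI : IsLeftIdeal T I) (hG : G ⊆ I) :
    lIdealGen T G ⊆ I := fun _ ha => aux_mem_lIdealGen_iff.mp ha I hI hG

lemma aux_lIdealGen_mono {A B : Set T} (hAB : A ⊆ B) : lIdealGen T A ⊆ lIdealGen T B :=
  aux_lIdealGen_subset (aux_isLeftIdeal_lIdealGen B) (hAB.trans (aux_subset_lIdealGen B))

lemma aux_mem_lIdealGen_finite {A : Set T} {a : T} (ha : a ∈ lIdealGen T A) :
    ∃ F : Finset T, ↑F ⊆ A ∧ a ∈ lIdealGen T (↑F : Set T) := by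
  have hU : IsLeftIdeal T {t : T | ∃ F : Finset T, ↑F ⊆ A ∧ t ∈ lIdealGen T (↑F : Set T)} := by
    refine ⟨⟨∅, by simp, (aux_isLeftIdeal_lIdealGen _).1⟩, ?_, ?_, ?_⟩
    · rintro a b ⟨Fa, hFa, ha⟩ ⟨Fb, hFb, hb⟩
      refine ⟨Fa ∪ Fb, by simp [Set.union_subset_iff, hFa, hFb], ?_⟩
      rw [Finset.coe_union]
      exact (aux_isLeftIdeal_lIdealGen _).2.1 a b
        (aux_lIdealGen_mono Set.subset_union_left ha)
        (aux_lIdealGen_mono Set.subset_union_right hb)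
    · rintro a ⟨F, hF, ha⟩
      exact ⟨F, hF, (aux_isLeftIdeal_lIdealGen _).2.2.1 a ha⟩
    · rintro a t ⟨F, hF, ha⟩
      exact ⟨F, hF, (aux_isLeftIdeal_lIdealGen _).2.2.2 a t ha⟩
  have hAU : A ⊆ {t : T | ∃ F : Finset T, ↑F ⊆ A ∧ t ∈ lIdealGen T (↑F : Set T)} := by
    intro a haA
    exact ⟨{a}, by simpa using haA, aux_subset_lIdealGen _ (by simp)⟩
  exact aux_lIdealGen_subset hU hAU ha

lemma aux_finset_subset_finite {A : Set T} (F0 : Finset T) (h : ↑F0 ⊆ lIdealGen T A) :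
    ∃ F : Finset T, ↑F ⊆ A ∧ ↑F0 ⊆ lIdealGen T (↑F : Set T) := by
  classical
  induction F0 using Finset.induction with
  | empty => exact ⟨∅, by simp, by simp⟩
  | @insert a F0 ha ih =>
    have h1 : (a : T) ∈ lIdealGen T A := h (by simp)
    obtain ⟨Fa, hFa, haF⟩ := aux_mem_lIdealGen_finite h1
    obtain ⟨F, hF, hF0⟩ := ih (fun t ht => h (by simp [ht]))
    refine ⟨Fa ∪ F, by simp [Set.union_subset_iff, hFa, hF], ?_⟩
    intro t ht
    rw [Finset.coe_union]
    rcases Finset.mem_insert.mp ht with rfl | ht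
    · exact aux_lIdealGen_mono Set.subset_union_left haF
    · exact aux_lIdealGen_mono Set.subset_union_right (hF0 ht)

lemma aux_exists_finset_gen (hN : LeftNoeth T) (A : Set T) :
    ∃ F : Finset T, ↑F ⊆ A ∧ lIdealGen T A ⊆ lIdealGen T (↑F : Set T) := by
  obtain ⟨F0, hF0⟩ := hN (lIdealGen T A) (aux_isLeftIdeal_lIdealGen A)
  have hsub : ↑F0 ⊆ lIdealGen T A := by
    rw [hF0]; exact aux_subset_lIdealGen _
  obtain ⟨F, hFA, hF⟩ := aux_finset_subset_finite F0 hsub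
  refine ⟨F, hFA, ?_⟩
  rw [hF0]
  exact aux_lIdealGen_subset (aux_isLeftIdeal_lIdealGen _) hF

lemma aux_foldl_mem {J : Set T} (hJ : IsLeftIdeal T J) (l : List T) (init : T)
    (hinit : init ∈ J) : l.foldl (fun b a => a * b) init ∈ J := by
  induction l generalizing init with
  | nil => exact hinit
  | cons a l ih => exact ih _ (hJ.2.2.2 _ _ hinit)

lemma aux_list_sum_mem {J : Set T} (hJ : IsLeftIdeal T J) (l : List T)
    (h : ∀ a ∈ l, a ∈ J) : l.sum ∈ J := by
  induction l with
  | nil => simpa using hJ.1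
  | cons a l ih =>
    rw [List.sum_cons]
    exact hJ.2.1 _ _ (h a List.mem_cons_self) (ih fun b hb => h b (List.mem_cons_of_mem a hb))

end AuxHBT

section AuxDeg

variable {R S : Type*} [NonAssocRing R] [NonAssocRing S]

lemma aux_degr_eq_bot (f : R →+* S) (x : S) (hb : Function.Bijective (rpoly f x)) {q : S}
    (hq : degr f x q = ⊥) : q = 0 := by
  have hex : ∃ c : ℕ →₀ R, rpoly f x c = q := hb.2 q
  rw [degr, dif_pos hex] at hq
  have hc : Classical.choose hex = 0 := Finsupp.support_eq_empty.mp (Finset.max_eq_bot.mp hq)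
  have := Classical.choose_spec hex
  rw [hc] at this
  rw [← this, rpoly, Finsupp.sum_zero_index]

end AuxDeg


lemma aux_lift_image {α β : Type*} (g : α → β) (B : Set α) (F : Finset β) (h : ↑F ⊆ g '' B) :
    ∃ P : Finset α, ↑P ⊆ B ∧ ↑F ⊆ g '' (↑P : Set α) := by
  classical
  induction F using Finset.induction with
  | empty => exact ⟨∅, by simp, by simp⟩
  | @insert a F ha ih =>
    obtain ⟨P, hPB, hFP⟩ := ih (fun t ht => h (by simp [ht]))
    obtain ⟨b, hbB, hba⟩ := h (by simp : a ∈ ↑(insert a F))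
    refine ⟨insert b P, by simp [Set.insert_subset_iff, hbB, hPB], ?_⟩
    intro t ht
    rw [Finset.coe_insert, Set.image_insert_eq]
    rw [Finset.coe_insert, Set.mem_insert_iff] at ht
    rcases ht with rfl | ht
    · exact Set.mem_insert_iff.mpr (Or.inl hba.symm)
    · exact Set.mem_insert_of_mem _ (hFP ht)

lemma aux_fin_gen_image {R S : Type*} [NonAssocRing R] (hR : LeftNoeth R) (g : S → R)
    (B : Set S) :
    ∃ P : Finset S, ↑P ⊆ B ∧ lIdealGen R (g '' B) ⊆ lIdealGen R (g '' (↑P : Set S)) := by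
  obtain ⟨F, hFsub, hFgen⟩ := aux_exists_finset_gen hR (g '' B)
  obtain ⟨P, hPB, hFP⟩ := aux_lift_image g B F hFsub
  exact ⟨P, hPB, hFgen.trans (aux_lIdealGen_subset (aux_isLeftIdeal_lIdealGen _)
    (fun t ht => aux_subset_lIdealGen _ (hFP ht)))⟩

/-- Hilbert's Basis Theorem for right GNOEs with right Euclidean division. -/
theorem stmt15 {R S : Type*} [NonAssocRing R] [NonAssocRing S] (f : R →+* S) (x : S)
    (h : IsRightGNOE f x) (hED : RightEDA f x)
    (hR : LeftNoeth R) : LeftNoeth S := by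
  intro I hI
  obtain ⟨Pinf, hPinfB, hPinfgen⟩ :=
    aux_fin_gen_image hR (lcr f x) {q : S | q ∈ I ∧ q ≠ 0}
  have hcovd : ∀ d : ℕ, ∃ P : Finset S,
      ↑P ⊆ {q : S | q ∈ I ∧ q ≠ 0 ∧ degr f x q ≤ (d : WithBot ℕ)} ∧
      lIdealGen R (lcr f x '' {q : S | q ∈ I ∧ q ≠ 0 ∧ degr f x q ≤ (d : WithBot ℕ)}) ⊆
        lIdealGen R (lcr f x '' (↑P : Set S)) :=
    fun d => aux_fin_gen_image hR (lcr f x) _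
  choose Pd hPdB hPdgen using hcovd
  set N : ℕ := Pinf.sup fun q => WithBot.unbotD 0 (degr f x q) with hN
  have hub : ∀ a : WithBot ℕ, a ≤ ((WithBot.unbotD 0 a : ℕ) : WithBot ℕ) := by
    intro a
    cases a with
    | bot => exact bot_le
    | coe m => exact le_of_eq (by rw [Nat.cast_withBot, WithBot.unbotD_coe])
  have hNdeg : ∀ p ∈ Pinf, degr f x p ≤ (N : WithBot ℕ) := by
    intro p hp
    exact (hub _).trans (by exact_mod_cast Finset.le_sup (f := fun q => WithBot.unbotD 0 (degr f x q)) hp)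
  set G : Finset S := Pinf ∪ (Finset.range N).biUnion Pd with hG
  have hGI : (↑G : Set S) ⊆ I := by
    intro t ht
    rcases Finset.mem_union.mp ht with ht | ht
    · exact (hPinfB ht).1
    · obtain ⟨d, _, htd⟩ := Finset.mem_biUnion.mp ht
      exact (hPdB d htd).1
  have hcov : ∀ d : ℕ, ∃ P : Finset S, P ⊆ G ∧
      (∀ p ∈ P, degr f x p ≤ (d : WithBot ℕ)) ∧
      ∀ q, q ∈ I → q ≠ 0 → degr f x q = (d : WithBot ℕ) →
        lcr f x q ∈ lIdealGen R (lcr f x '' (↑P : Set S)) := by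
    intro d
    by_cases hdN : d < N
    · refine ⟨Pd d, ?_, ?_, ?_⟩
      · intro t ht
        exact Finset.mem_union_right _ (Finset.mem_biUnion.mpr ⟨d, Finset.mem_range.mpr hdN, ht⟩)
      · intro q hq
        exact (hPdB d hq).2.2
      · intro q hqI hq0 hqd
        exact hPdgen d (aux_subset_lIdealGen _ ⟨q, ⟨hqI, hq0, le_of_eq hqd⟩, rfl⟩)
    · refine ⟨Pinf, Finset.subset_union_left, ?_, ?_⟩
      · intro q hq
        exact (hNdeg q hq).trans (by exact_mod_cast Nat.le_of_not_lt hdN)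
      · intro q hqI hq0 hqd
        exact hPinfgen (aux_subset_lIdealGen _ ⟨q, ⟨hqI, hq0⟩, rfl⟩)
  have hkey : ∀ n : ℕ, ∀ q, q ∈ I → degr f x q < (n : WithBot ℕ) →
      q ∈ lIdealGen S (↑G : Set S) := by
    intro n
    induction n using Nat.strong_induction_on with
    | _ n ih =>
      intro q hqI hqdeg
      by_cases hq0 : q = 0
      · rw [hq0]; exact (aux_isLeftIdeal_lIdealGen _).1
      have hnb : degr f x q ≠ ⊥ := fun hb => hq0 (aux_degr_eq_bot f x h.basis hb)
      obtain ⟨d, hd0⟩ := WithBot.ne_bot_iff_exists.mp hnb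
      have hd : degr f x q = (d : WithBot ℕ) := by rw [Nat.cast_withBot]; exact hd0.symm
      obtain ⟨P, hPG, hPdeg, hPlc⟩ := hcov d
      set p : Fin P.card → S := fun i => ((P.equivFin.symm i : {y // y ∈ P}) : S) with hp
      have hpP : ∀ i, p i ∈ P := fun i => (P.equivFin.symm i).2
      have hrange : (Set.range fun i => lcr f x (p i)) = lcr f x '' (↑P : Set S) := by
        have h1 : Set.range p = (↑P : Set S) := by
          ext y
          constructor
          · rintro ⟨i, rfl⟩
            exact hpP i
          · intro hy
            exact ⟨P.equivFin ⟨y, hy⟩, by simp [hp]⟩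
        rw [← h1, ← Set.range_comp]
        rfl
      obtain ⟨s, hs, hlt⟩ := hED P.card p q hq0
        (fun i => by rw [hd]; exact hPdeg _ (hpP i))
        (by rw [hrange]; exact hPlc q hqI hq0 hd)
      obtain ⟨L, hsL, -⟩ := hs
      have hsG : s ∈ lIdealGen S (↑G : Set S) := by
        rw [hsL]
        refine aux_list_sum_mem (aux_isLeftIdeal_lIdealGen _) _ ?_
        intro a ha
        rw [List.mem_map] at ha
        obtain ⟨t, -, rfl⟩ := ha
        exact aux_foldl_mem (aux_isLeftIdeal_lIdealGen _) _ _
          (aux_subset_lIdealGen _ (hPG (hpP t.1)))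
      have hsI : s ∈ I := aux_lIdealGen_subset hI hGI hsG
      have hqs : q - s ∈ I := by
        rw [sub_eq_add_neg]
        exact hI.2.1 _ _ hqI (hI.2.2.1 _ hsI)
      have hdn : d < n := by
        have h3 := hqdeg
        rw [hd, Nat.cast_withBot, Nat.cast_withBot] at h3
        exact WithBot.coe_lt_coe.mp h3
      have h2 : q - s ∈ lIdealGen S (↑G : Set S) :=
        ih d hdn _ hqs (by rw [← hd]; exact hlt)
      have h4 : q = (q - s) + s := by abel
      rw [h4]
      exact (aux_isLeftIdeal_lIdealGen _).2.1 _ _ h2 hsG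
  refine ⟨G, Set.Subset.antisymm ?_ (aux_lIdealGen_subset hI hGI)⟩
  intro q hq
  by_cases hb : degr f x q = ⊥
  · exact hkey 1 q hq (by rw [hb]; exact WithBot.bot_lt_coe 1)
  · obtain ⟨d, hd⟩ := WithBot.ne_bot_iff_exists.mp hb
    refine hkey (d + 1) q hq ?_
    rw [← hd, Nat.cast_withBot]
    exact WithBot.coe_lt_coe.mpr (Nat.lt_succ_self d)
end

section
/- Let R be a nonassociative ring with an automorphism σ and an additive map δ satisfying δ(1)=0. If R is left Noetherian, then R[X;σ,δ] is left Noetherian. -/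
open Finset
open scoped Classical

section Aux17

variable {R : Type*} {S : Type*} [NonAssocRing R] [NonAssocRing S]

lemma lpoly_zero17 (f : R →+* S) (x : S) : lpoly f x (0 : ℕ →₀ R) = 0 :=
  Finsupp.sum_zero_index

lemma lpoly_add17 (f : R →+* S) (x : S) (a b : ℕ →₀ R) :
    lpoly f x (a + b) = lpoly f x a + lpoly f x b := by
  unfold lpoly
  apply Finsupp.sum_add_index'
  · intro i; simp
  · intro i r s; simp [add_mul]

lemma mem_lIdealGen17 {T : Type*} [NonAssocRing T] {G : Set T} {a : T} :
    a ∈ lIdealGen T G ↔ ∀ J : Set T, IsLeftIdeal T J → G ⊆ J → a ∈ J := by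
  constructor
  · intro h J hJ hG; exact Set.mem_sInter.mp h J ⟨hJ, hG⟩
  · intro h J hJ; exact h J hJ.1 hJ.2

lemma isLeftIdeal_lIdealGen17 (T : Type*) [NonAssocRing T] (G : Set T) :
    IsLeftIdeal T (lIdealGen T G) := by
  refine ⟨?_, ?_, ?_, ?_⟩
  · exact mem_lIdealGen17.mpr fun J hJ _ => hJ.1
  · intro a b ha hb
    exact mem_lIdealGen17.mpr fun J hJ hG =>
      hJ.2.1 a b (mem_lIdealGen17.mp ha J hJ hG) (mem_lIdealGen17.mp hb J hJ hG)
  · intro a ha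
    exact mem_lIdealGen17.mpr fun J hJ hG => hJ.2.2.1 a (mem_lIdealGen17.mp ha J hJ hG)
  · intro a t ha
    exact mem_lIdealGen17.mpr fun J hJ hG => hJ.2.2.2 a t (mem_lIdealGen17.mp ha J hJ hG)

lemma subset_lIdealGen17 {T : Type*} [NonAssocRing T] (G : Set T) : G ⊆ lIdealGen T G :=
  fun _ ha => mem_lIdealGen17.mpr fun _ _ hG => hG ha

lemma lIdealGen_subset17 {T : Type*} [NonAssocRing T] {G I : Set T} (hI : IsLeftIdeal T I)
    (hG : G ⊆ I) : lIdealGen T G ⊆ I :=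
  fun _ ha => mem_lIdealGen17.mp ha I hI hG

/-- The coefficient family of an element of `S`. -/
noncomputable def coeffs17 (f : R →+* S) (x : S) (h : Function.Bijective (lpoly f x)) (q : S) :
    ℕ →₀ R :=
  (Equiv.ofBijective _ h).symm q

lemma lpoly_coeffs17 (f : R →+* S) (x : S) (h : Function.Bijective (lpoly f x)) (q : S) :
    lpoly f x (coeffs17 f x h q) = q :=
  (Equiv.ofBijective _ h).apply_symm_apply q

lemma coeffs17_lpoly (f : R →+* S) (x : S) (h : Function.Bijective (lpoly f x)) (c : ℕ →₀ R) :
    coeffs17 f x h (lpoly f x c) = c :=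
  (Equiv.ofBijective _ h).symm_apply_apply c

lemma coeffs17_add (f : R →+* S) (x : S) (h : Function.Bijective (lpoly f x)) (a b : S) :
    coeffs17 f x h (a + b) = coeffs17 f x h a + coeffs17 f x h b := by
  apply h.1
  rw [lpoly_add17, lpoly_coeffs17, lpoly_coeffs17, lpoly_coeffs17]

lemma coeffs17_zero (f : R →+* S) (x : S) (h : Function.Bijective (lpoly f x)) :
    coeffs17 f x h 0 = 0 := by
  apply h.1
  rw [lpoly_coeffs17, lpoly_zero17]

lemma coeffs17_neg (f : R →+* S) (x : S) (h : Function.Bijective (lpoly f x)) (a : S) :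
    coeffs17 f x h (-a) = -coeffs17 f x h a := by
  have h0 : coeffs17 f x h a + coeffs17 f x h (-a) = 0 := by
    rw [← coeffs17_add, add_neg_cancel, coeffs17_zero]
  exact eq_neg_of_add_eq_zero_right h0

lemma coeffs17_sub (f : R →+* S) (x : S) (h : Function.Bijective (lpoly f x)) (a b : S) :
    coeffs17 f x h (a - b) = coeffs17 f x h a - coeffs17 f x h b := by
  rw [sub_eq_add_neg, sub_eq_add_neg, coeffs17_add, coeffs17_neg]

section Mul

variable (f : R →+* S) (x : S) (σ δ : R → R)
variable (hmul : ∀ (r s : R) (m n : ℕ),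
    (f r * pw x m) * (f s * pw x n)
      = ∑ i ∈ Finset.range (m + 1), f (r * pimap σ δ i m s) * pw x (i + n))

include hmul

lemma stmt17_mul0 (r s : R) (i : ℕ) : f r * (f s * pw x i) = f (r * s) * pw x i := by
  have h := hmul r s 0 i
  simpa [pw, pimap] using h

lemma stmt17_mulx (hδ0 : δ 0 = 0) (s : R) (i : ℕ) :
    x * (f s * pw x i) = f (δ s) * pw x i + f (σ s) * pw x (i + 1) := by
  have hx : f 1 * pw x 1 = x := by simp [pw]
  have h := hmul 1 s 1 i
  rw [hx] at h
  rw [h, Finset.sum_range_succ, Finset.sum_range_one]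
  simp [pimap, hδ0, add_comm]

lemma stmt17_mulr_poly (r : R) (c : ℕ →₀ R) :
    f r * lpoly f x c = lpoly f x (c.mapRange (fun s => r * s) (mul_zero r)) := by
  unfold lpoly
  rw [Finsupp.sum_mapRange_index (fun i => by simp)]
  have h1 : f r * c.sum (fun i s => f s * pw x i) = c.sum fun i s => f r * (f s * pw x i) :=
    map_finsuppSum (AddMonoidHom.mulLeft (f r)) c _
  rw [h1]
  exact Finsupp.sum_congr fun i _ => stmt17_mul0 f x σ δ hmul r (c i) i

lemma stmt17_mulx_poly (hδ0 : δ 0 = 0) (hσ0 : σ 0 = 0) (c : ℕ →₀ R) :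
    x * lpoly f x c
      = lpoly f x (c.mapRange δ hδ0 + Finsupp.mapDomain (· + 1) (c.mapRange σ hσ0)) := by
  rw [lpoly_add17]
  unfold lpoly
  rw [Finsupp.sum_mapRange_index (fun i => by simp)]
  rw [Finsupp.sum_mapDomain_index (fun b => by simp) (fun b m₁ m₂ => by simp [add_mul])]
  rw [Finsupp.sum_mapRange_index (fun i => by simp)]
  have h1 : x * c.sum (fun i s => f s * pw x i) = c.sum fun i s => x * (f s * pw x i) :=
    map_finsuppSum (AddMonoidHom.mulLeft x) c _
  rw [h1]
  have h2 : (c.sum fun i s => x * (f s * pw x i))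
      = c.sum fun i s => f (δ s) * pw x i + f (σ s) * pw x (i + 1) :=
    Finsupp.sum_congr fun i _ => stmt17_mulx f x σ δ hmul hδ0 (c i) i
  rw [h2, Finsupp.sum_add]

end Mul

end Aux17


section Aux17b

variable {R : Type*} {S : Type*} [NonAssocRing R] [NonAssocRing S]
variable (f : R →+* S) (x : S) (σ δ : R → R)
variable (hbij : Function.Bijective (lpoly f x))
variable (hmul : ∀ (r s : R) (m n : ℕ),
    (f r * pw x m) * (f s * pw x n)
      = ∑ i ∈ Finset.range (m + 1), f (r * pimap σ δ i m s) * pw x (i + n))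

/-- The set of "leading coefficients at degree `n`" of elements of `K` of degree `≤ n`. -/
def Lset17 (K : Set S) (n : ℕ) : Set R :=
  {c | ∃ q ∈ K, (∀ j, n < j → coeffs17 f x hbij q j = 0) ∧ coeffs17 f x hbij q n = c}

lemma mem_Lset17 {K : Set S} {n : ℕ} {c : R} :
    c ∈ Lset17 f x hbij K n
      ↔ ∃ q ∈ K, (∀ j, n < j → coeffs17 f x hbij q j = 0) ∧ coeffs17 f x hbij q n = c :=
  Iff.rfl

include hmul

lemma coeffs17_smul (r : R) (q : S) (i : ℕ) :
    coeffs17 f x hbij (f r * q) i = r * coeffs17 f x hbij q i := by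
  have h1 : f r * q
      = lpoly f x ((coeffs17 f x hbij q).mapRange (fun s => r * s) (mul_zero r)) := by
    conv_lhs => rw [← lpoly_coeffs17 f x hbij q]
    exact stmt17_mulr_poly f x σ δ hmul r _
  rw [h1, coeffs17_lpoly, Finsupp.mapRange_apply]

lemma coeffs17_xmul (hδ0 : δ 0 = 0) (hσ0 : σ 0 = 0) (q : S) (i : ℕ) :
    coeffs17 f x hbij (x * q) (i + 1)
      = δ (coeffs17 f x hbij q (i + 1)) + σ (coeffs17 f x hbij q i) := by
  have h1 : x * q = lpoly f x ((coeffs17 f x hbij q).mapRange δ hδ0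
      + Finsupp.mapDomain (· + 1) ((coeffs17 f x hbij q).mapRange σ hσ0)) := by
    conv_lhs => rw [← lpoly_coeffs17 f x hbij q]
    exact stmt17_mulx_poly f x σ δ hmul hδ0 hσ0 _
  rw [h1, coeffs17_lpoly, Finsupp.add_apply, Finsupp.mapRange_apply]
  congr 1
  have h2 := Finsupp.mapDomain_apply (f := fun a : ℕ => a + 1) (add_left_injective 1)
    ((coeffs17 f x hbij q).mapRange σ hσ0) i
  rw [h2, Finsupp.mapRange_apply]

lemma stmt17_Lset_ideal {K : Set S} (hK : IsLeftIdeal S K) (n : ℕ) :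
    IsLeftIdeal R (Lset17 f x hbij K n) := by
  refine ⟨⟨0, hK.1, ?_, ?_⟩, ?_, ?_, ?_⟩
  · intro j _; rw [coeffs17_zero]; rfl
  · rw [coeffs17_zero]; rfl
  · rintro a b ⟨q1, h1, hb1, hc1⟩ ⟨q2, h2, hb2, hc2⟩
    refine ⟨q1 + q2, hK.2.1 _ _ h1 h2, fun j hj => ?_, ?_⟩
    · rw [coeffs17_add, Finsupp.add_apply, hb1 j hj, hb2 j hj, add_zero]
    · rw [coeffs17_add, Finsupp.add_apply, hc1, hc2]
  · rintro a ⟨q, h, hb, hc⟩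
    refine ⟨-q, hK.2.2.1 _ h, fun j hj => ?_, ?_⟩
    · rw [coeffs17_neg, Finsupp.neg_apply, hb j hj, neg_zero]
    · rw [coeffs17_neg, Finsupp.neg_apply, hc]
  · rintro a t ⟨q, h, hb, hc⟩
    refine ⟨f t * q, hK.2.2.2 q (f t) h, fun j hj => ?_, ?_⟩
    · rw [coeffs17_smul f x σ δ hbij hmul, hb j hj, mul_zero]
    · rw [coeffs17_smul f x σ δ hbij hmul, hc]

lemma stmt17_Lset_step (hδ0 : δ 0 = 0) (hσ0 : σ 0 = 0) {K : Set S} (hK : IsLeftIdeal S K)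
    (n : ℕ) (c : R) (hc : c ∈ Lset17 f x hbij K n) : σ c ∈ Lset17 f x hbij K (n + 1) := by
  obtain ⟨q, hq, hb, hcc⟩ := hc
  refine ⟨x * q, hK.2.2.2 q x hq, fun j hj => ?_, ?_⟩
  · obtain ⟨i, rfl⟩ : ∃ i, j = i + 1 := ⟨j - 1, by omega⟩
    rw [coeffs17_xmul f x σ δ hbij hmul hδ0 hσ0, hb i (by omega), hb (i + 1) (by omega), hδ0,
      hσ0, add_zero]
  · rw [coeffs17_xmul f x σ δ hbij hmul hδ0 hσ0, hb (n + 1) (by omega), hδ0, hcc, zero_add]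

end Aux17b

/-- for an automorphism `σ` and additive `δ` with `δ(1)=0`, if `R` is left
Noetherian then `R[X;σ,δ]` is left Noetherian. -/
theorem stmt17 {R S : Type*} [NonAssocRing R] [NonAssocRing S] (f : R →+* S) (x : S) (σ δ : R → R)
    (hσadd : ∀ a b : R, σ (a + b) = σ a + σ b)
    (hσmul : ∀ a b : R, σ (a * b) = σ a * σ b)
    (hσ1 : σ 1 = 1) (hσbij : Function.Bijective σ)
    (hδadd : ∀ a b : R, δ (a + b) = δ a + δ b) (hδ1 : δ 1 = 0)
    (hpoly : IsGPolyRing σ δ f x)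
    (hR : LeftNoeth R) : LeftNoeth S := by
  obtain ⟨hf, hpa, hbij, hmul⟩ := hpoly
  have hδ0 : δ 0 = 0 := by
    have h := hδadd 0 0
    rw [add_zero] at h
    exact left_eq_add.mp h
  have hσ0 : σ 0 = 0 := by
    have h := hσadd 0 0
    rw [add_zero] at h
    exact left_eq_add.mp h
  have hitadd : ∀ d (a b : R), σ^[d] (a + b) = σ^[d] a + σ^[d] b := by
    intro d
    induction d with
    | zero => intro a b; simp
    | succ d ih =>
      intro a b
      rw [Function.iterate_succ_apply', Function.iterate_succ_apply',
        Function.iterate_succ_apply', ih, hσadd]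
  have hitmul : ∀ d (a b : R), σ^[d] (a * b) = σ^[d] a * σ^[d] b := by
    intro d
    induction d with
    | zero => intro a b; simp
    | succ d ih =>
      intro a b
      rw [Function.iterate_succ_apply', Function.iterate_succ_apply',
        Function.iterate_succ_apply', ih, hσmul]
  have hit0 : ∀ d, σ^[d] (0 : R) = 0 := by
    intro d
    induction d with
    | zero => simp
    | succ d ih => rw [Function.iterate_succ_apply', ih, hσ0]
  have hitneg : ∀ d (a : R), σ^[d] (-a) = -σ^[d] a := by
    intro d a
    have h : σ^[d] a + σ^[d] (-a) = 0 := by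
      rw [← hitadd, add_neg_cancel, hit0]
    exact eq_neg_of_add_eq_zero_right h
  have key_ext0 : ∀ q : S, (∀ i, coeffs17 f x hbij q i = 0) → q = 0 := by
    intro q h
    have h1 : coeffs17 f x hbij q = 0 := Finsupp.ext fun i => h i
    have h2 := lpoly_coeffs17 f x hbij q
    rw [h1, lpoly_zero17] at h2
    exact h2.symm
  have key_bound : ∀ q : S, ∃ n, ∀ j, n < j → coeffs17 f x hbij q j = 0 := by
    intro q
    refine ⟨(coeffs17 f x hbij q).support.sup id, fun j hj => ?_⟩
    by_contra h
    have h1 : j ∈ (coeffs17 f x hbij q).support := Finsupp.mem_support_iff.mpr h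
    have h2 := Finset.le_sup (f := id) h1
    simp only [id_eq] at h2
    omega
  intro I hI
  set L : ℕ → Set R := fun n => Lset17 f x hbij I n with hLdef
  set M : ℕ → Set R := fun n => {c | σ^[n] c ∈ L n} with hMdef
  have hL_ideal : ∀ n, IsLeftIdeal R (L n) := fun n => stmt17_Lset_ideal f x σ δ hbij hmul hI n
  have hM_ideal : ∀ n, IsLeftIdeal R (M n) := by
    intro n
    have h := hL_ideal n
    refine ⟨?_, ?_, ?_, ?_⟩
    · show σ^[n] (0 : R) ∈ L n
      rw [hit0]; exact h.1
    · intro a b ha hb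
      show σ^[n] (a + b) ∈ L n
      rw [hitadd]; exact h.2.1 _ _ ha hb
    · intro a ha
      show σ^[n] (-a) ∈ L n
      rw [hitneg]; exact h.2.2.1 _ ha
    · intro a t ha
      show σ^[n] (t * a) ∈ L n
      rw [hitmul]; exact h.2.2.2 _ _ ha
  have hM_mono : ∀ m n : ℕ, m ≤ n → M m ⊆ M n := by
    have hstep : ∀ n, M n ⊆ M (n + 1) := by
      intro n c hc
      show σ^[n + 1] c ∈ L (n + 1)
      rw [Function.iterate_succ_apply']
      exact stmt17_Lset_step f x σ δ hbij hmul hδ0 hσ0 hI n _ hc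
    intro m n hmn
    induction hmn with
    | refl => exact fun _ h => h
    | step _ ih => exact fun c hc => hstep _ (ih hc)
  have hU_ideal : IsLeftIdeal R (⋃ n, M n) := by
    refine ⟨?_, ?_, ?_, ?_⟩
    · exact Set.mem_iUnion.mpr ⟨0, (hM_ideal 0).1⟩
    · intro a b ha hb
      obtain ⟨m, hm⟩ := Set.mem_iUnion.mp ha
      obtain ⟨n, hn⟩ := Set.mem_iUnion.mp hb
      exact Set.mem_iUnion.mpr ⟨max m n, (hM_ideal _).2.1 a b
        (hM_mono m _ (le_max_left _ _) hm) (hM_mono n _ (le_max_right _ _) hn)⟩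
    · intro a ha
      obtain ⟨m, hm⟩ := Set.mem_iUnion.mp ha
      exact Set.mem_iUnion.mpr ⟨m, (hM_ideal m).2.2.1 a hm⟩
    · intro a t ha
      obtain ⟨m, hm⟩ := Set.mem_iUnion.mp ha
      exact Set.mem_iUnion.mpr ⟨m, (hM_ideal m).2.2.2 a t hm⟩
  obtain ⟨GU, hGU⟩ := hR _ hU_ideal
  have hGU_sub : ∀ g ∈ GU, ∃ n, g ∈ M n := by
    intro g hg
    have hgU : g ∈ ⋃ n, M n := by
      rw [hGU]
      exact subset_lIdealGen17 _ (Finset.mem_coe.mpr hg)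
    exact Set.mem_iUnion.mp hgU
  choose nofg hnofg using hGU_sub
  set N : ℕ := GU.attach.sup (fun g => nofg g g.2) with hNdef
  have hGUN : (GU : Set R) ⊆ M N := by
    intro g hg
    have hg' : g ∈ GU := hg
    exact hM_mono _ N
      (Finset.le_sup (f := fun g : {y // y ∈ GU} => nofg g.1 g.2) (Finset.mem_attach _ ⟨g, hg'⟩))
      (hnofg g hg')
  have hMU : ∀ d, M d ⊆ M N := by
    intro d c hc
    have hcU : c ∈ ⋃ n, M n := Set.mem_iUnion.mpr ⟨d, hc⟩
    rw [hGU] at hcU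
    exact lIdealGen_subset17 (hM_ideal N) hGUN hcU
  have hLdown : ∀ d, N ≤ d → ∀ c ∈ L (d + 1), ∃ c' ∈ L d, σ c' = c := by
    intro d hNd c hc
    obtain ⟨u, hu⟩ := (hσbij.iterate (d + 1)).2 c
    have huM : u ∈ M (d + 1) := by
      show σ^[d + 1] u ∈ L (d + 1)
      rw [hu]; exact hc
    have huMd : u ∈ M d := hM_mono N d hNd (hMU (d + 1) huM)
    exact ⟨σ^[d] u, huMd, by rw [← Function.iterate_succ_apply' σ d u, hu]⟩
  choose GF hGF using fun n => hR (L n) (hL_ideal n)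
  have hGFL : ∀ n, (GF n : Set R) ⊆ L n := by
    intro n a ha
    rw [hGF n]
    exact subset_lIdealGen17 _ ha
  have hwit : ∀ (n : ℕ) (a : R), a ∈ L n →
      ∃ q, q ∈ I ∧ (∀ j, n < j → coeffs17 f x hbij q j = 0) ∧ coeffs17 f x hbij q n = a :=
    fun n a ha => ha
  choose wit hwitI hwitb hwitc using hwit
  set P : Finset S :=
    (Finset.range (N + 1)).biUnion
      (fun n => (GF n).attach.image (fun a => wit n a.1 (hGFL n a.2))) with hPdef
  set J : Set S := lIdealGen S ↑P with hJdef
  have hJ_ideal : IsLeftIdeal S J := isLeftIdeal_lIdealGen17 S _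
  have hPI : (P : Set S) ⊆ I := by
    intro q hq
    have hq' : q ∈ P := hq
    rw [hPdef, Finset.mem_biUnion] at hq'
    obtain ⟨n, _, hq2⟩ := hq'
    rw [Finset.mem_image] at hq2
    obtain ⟨a, _, rfl⟩ := hq2
    exact hwitI n a.1 _
  have hJI : J ⊆ I := lIdealGen_subset17 hI hPI
  set C : ℕ → Set R := fun n => Lset17 f x hbij J n with hCdef
  have hC_ideal : ∀ n, IsLeftIdeal R (C n) :=
    fun n => stmt17_Lset_ideal f x σ δ hbij hmul hJ_ideal n
  have hGC : ∀ n, n ≤ N → (GF n : Set R) ⊆ C n := by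
    intro n hn a ha
    have hmemP : wit n a (hGFL n ha) ∈ P := by
      rw [hPdef, Finset.mem_biUnion]
      exact ⟨n, Finset.mem_range.mpr (by omega),
        Finset.mem_image.mpr ⟨⟨a, ha⟩, Finset.mem_attach _ _, rfl⟩⟩
    have hwJ : wit n a (hGFL n ha) ∈ J := by
      rw [hJdef]; exact subset_lIdealGen17 (T := S) (P : Set S) hmemP
    exact ⟨wit n a (hGFL n ha), hwJ, hwitb n a _, hwitc n a _⟩
  have hmain : ∀ n, L n ⊆ C n := by
    intro n
    induction n with
    | zero =>
      rw [hGF 0]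
      exact lIdealGen_subset17 (hC_ideal 0) (hGC 0 (Nat.zero_le N))
    | succ n ih =>
      by_cases hn : n + 1 ≤ N
      · rw [hGF (n + 1)]
        exact lIdealGen_subset17 (hC_ideal _) (hGC _ hn)
      · intro c hc
        obtain ⟨c', hc', rfl⟩ := hLdown n (by omega) c hc
        exact stmt17_Lset_step f x σ δ hbij hmul hδ0 hσ0 hJ_ideal n c' (ih hc')
  have hIJ : ∀ n, ∀ q ∈ I, (∀ j, n ≤ j → coeffs17 f x hbij q j = 0) → q ∈ J := by
    intro n
    induction n with
    | zero =>
      intro q _ h0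
      have hq0 : q = 0 := key_ext0 q fun i => h0 i (Nat.zero_le i)
      rw [hq0]
      exact hJ_ideal.1
    | succ n ih =>
      intro q hq h0
      have hcL : coeffs17 f x hbij q n ∈ L n :=
        ⟨q, hq, fun j hj => h0 j (by omega), rfl⟩
      obtain ⟨q', hq'J, hq'b, hq'c⟩ := hmain n hcL
      have hsub : q - q' ∈ I := by
        rw [sub_eq_add_neg]
        exact hI.2.1 q (-q') hq (hI.2.2.1 q' (hJI hq'J))
      have hcoef : ∀ j, n ≤ j → coeffs17 f x hbij (q - q') j = 0 := by
        intro j hj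
        rw [coeffs17_sub, Finsupp.sub_apply]
        rcases Nat.lt_or_ge n j with h | h
        · rw [h0 j (by omega), hq'b j h, sub_zero]
        · have hjn : j = n := le_antisymm h hj
          rw [hjn, hq'c]
          exact sub_self _
      have hqJ : q - q' ∈ J := ih (q - q') hsub hcoef
      have hqe : q = (q - q') + q' := (sub_add_cancel q q').symm
      rw [hqe]
      exact hJ_ideal.2.1 _ _ hqJ hq'J
  refine ⟨P, Set.Subset.antisymm ?_ hJI⟩
  intro q hq
  obtain ⟨n, hn⟩ := key_bound q
  exact hIJ (n + 1) q hq (fun j hj => hn j (by omega))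
end
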